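/- arXiv:2602.06130 — 2 statements merged into one kernel-verified Lean document; each statement's English description precedes it below -/
import Mathlib

section
/- (FWM Lower Bound.) Let 𝒳, 𝒮, 𝒜 be finite nonempty types, μ a pmf on 𝒳, ρ(·|x) a pmf on 𝒜 for each x, and P(·|x,z) a pmf on 𝒮 for each (x,z), and let p(x,z,ŷ) = μ(x)·ρ(z|x)·P(ŷ|x,z) be the data-induced joint distribution. Let Q(·|x,ŷ) be, for each (x,ŷ), a pmf on 𝒜 with Q(z|x,ŷ) > 0 whenever p(x,z,ŷ) > 0. Then the conditional mutual information under p satisfies I(Z;Ŷ|X) ≥ (−Σ_x μ(x) Σ_z ρ(z|x) log ρ(z|x)) + Σ_{x,z,ŷ} p(x,z,ŷ) · log Q(z|x,ŷ). In words: the entropy of the belief distribution ρ plus the expected log-probability that the variational posterior Q assigns to the latent action on generated transitions is a variational lower bound on I(Z;Ŷ|X). -/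
/-!
With `p_Z(x,z) = μ(x) ρ(z|x)` and `p_Y(x,ŷ) = Σ_z p(x,z,ŷ)`, each summand of `I(Z;Ŷ|X)` splits as
`p log (p / (p_Y Q)) + p log Q - p log ρ`. The last two terms sum to the right-hand side, and for
fixed `(x, ŷ)` the first sums to a nonnegative quantity by Gibbs' inequality
`Σ_z a_z log (a_z / b_z) ≥ Σ_z a_z - Σ_z b_z`, applied to `a_z = p(x,z,ŷ)` and
`b_z = p_Y(x,ŷ) Q(z|x,ŷ)`, which have the same total mass because `Q(·|x,ŷ)` is a pmf.
-/

open Finset Real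

theorem Real.sub_le_mul_log_div {a b : ℝ} (ha : 0 ≤ a) (hb : 0 ≤ b) (hab : 0 < a → 0 < b) :
    a - b ≤ a * log (a / b) := by
  rcases ha.eq_or_lt with rfl | ha
  · simpa using hb
  have hb := hab ha
  have h := one_sub_inv_le_log_of_pos (div_pos ha hb)
  rw [inv_div] at h
  calc a - b = a * (1 - b / a) := by field_simp
    _ ≤ a * log (a / b) := mul_le_mul_of_nonneg_left h ha.le

theorem Finset.sum_sub_sum_le_sum_mul_log_div {ι : Type*} (s : Finset ι) {a b : ι → ℝ}
    (ha : ∀ i ∈ s, 0 ≤ a i) (hb : ∀ i ∈ s, 0 ≤ b i) (hab : ∀ i ∈ s, 0 < a i → 0 < b i) :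
    ∑ i ∈ s, a i - ∑ i ∈ s, b i ≤ ∑ i ∈ s, a i * log (a i / b i) := by
  rw [← sum_sub_distrib]
  exact sum_le_sum fun i hi => sub_le_mul_log_div (ha i hi) (hb i hi) (hab i hi)

section VariationalBound

variable {𝒳 𝒮 𝒜 : Type*} {μ : 𝒳 → ℝ} {ρ : 𝒳 → 𝒜 → ℝ} {p : 𝒳 → 𝒜 → 𝒮 → ℝ} {Q : 𝒳 → 𝒮 → 𝒜 → ℝ}

theorem mul_log_condMutualInfo_integrand_eq [Fintype 𝒮] [Fintype 𝒜]
    (hp0 : ∀ x z yhat, 0 ≤ p x z yhat)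
    (hpZ : ∀ x z, ∑ yhat, p x z yhat = μ x * ρ x z)
    (hQpos : ∀ x z yhat, 0 < p x z yhat → 0 < Q x yhat z) (x : 𝒳) (z : 𝒜) (yhat : 𝒮) :
    p x z yhat * log (p x z yhat * μ x / ((∑ yhat', p x z yhat') * ∑ z', p x z' yhat))
      = p x z yhat * log (p x z yhat / ((∑ z', p x z' yhat) * Q x yhat z))
        + p x z yhat * log (Q x yhat z) - p x z yhat * log (ρ x z) := by
  rcases (hp0 x z yhat).eq_or_lt with h0 | hpos
  · simp [← h0]
  have hpY : 0 < ∑ z', p x z' yhat :=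
    hpos.trans_le (single_le_sum (fun z' _ => hp0 x z' yhat) (mem_univ z))
  have hμρ : μ x * ρ x z ≠ 0 := by
    rw [← hpZ]
    exact (hpos.trans_le (single_le_sum (fun y _ => hp0 x z y) (mem_univ yhat))).ne'
  have hQ := hQpos x z yhat hpos
  have hsplit : p x z yhat * μ x / ((∑ yhat', p x z yhat') * ∑ z', p x z' yhat)
      = p x z yhat / ((∑ z', p x z' yhat) * Q x yhat z) * Q x yhat z / ρ x z := by
    rw [hpZ]
    field_simp [left_ne_zero_of_mul hμρ]
  rw [hsplit, log_div (by positivity) (right_ne_zero_of_mul hμρ), log_mul (by positivity) hQ.ne']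
  ring

theorem sum_mul_log_div_posterior_nonneg [Fintype 𝒜] (hp0 : ∀ x z yhat, 0 ≤ p x z yhat)
    (hQ0 : ∀ x yhat z, 0 ≤ Q x yhat z) (hQ1 : ∀ x yhat, ∑ z, Q x yhat z = 1)
    (hQpos : ∀ x z yhat, 0 < p x z yhat → 0 < Q x yhat z) (x : 𝒳) (yhat : 𝒮) :
    0 ≤ ∑ z, p x z yhat * log (p x z yhat / ((∑ z', p x z' yhat) * Q x yhat z)) := by
  have hpY : 0 ≤ ∑ z', p x z' yhat := sum_nonneg fun z _ => hp0 x z yhat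
  have hgibbs := sum_sub_sum_le_sum_mul_log_div univ (a := fun z => p x z yhat)
    (b := fun z => (∑ z', p x z' yhat) * Q x yhat z) (fun z _ => hp0 x z yhat)
    (fun z _ => mul_nonneg hpY (hQ0 x yhat z))
    (fun z _ hpos => mul_pos
      (hpos.trans_le (single_le_sum (fun z' _ => hp0 x z' yhat) (mem_univ z)))
      (hQpos x z yhat hpos))
  rwa [← mul_sum, hQ1, mul_one, sub_self] at hgibbs

theorem sum_mul_log_belief_eq [Fintype 𝒳] [Fintype 𝒮] [Fintype 𝒜]
    (hpZ : ∀ x z, ∑ yhat, p x z yhat = μ x * ρ x z) :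
    ∑ x, ∑ z, ∑ yhat, p x z yhat * log (ρ x z) = ∑ x, μ x * ∑ z, ρ x z * log (ρ x z) := by
  refine sum_congr rfl fun x _ => ?_
  rw [mul_sum]
  refine sum_congr rfl fun z _ => ?_
  rw [← sum_mul, hpZ, mul_assoc]

end VariationalBound

theorem fwm_lower_bound_general
    {𝒳 𝒮 𝒜 : Type*} [Fintype 𝒳] [Fintype 𝒮] [Fintype 𝒜]
    (μ : 𝒳 → ℝ) (hμ0 : ∀ x, 0 ≤ μ x)
    (ρ : 𝒳 → 𝒜 → ℝ) (hρ0 : ∀ x z, 0 ≤ ρ x z)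
    (P : 𝒳 → 𝒜 → 𝒮 → ℝ) (hP0 : ∀ x z yhat, 0 ≤ P x z yhat)
    (hP1 : ∀ x z, ∑ yhat, P x z yhat = 1)
    (p : 𝒳 → 𝒜 → 𝒮 → ℝ) (hp : ∀ x z yhat, p x z yhat = μ x * ρ x z * P x z yhat)
    (Q : 𝒳 → 𝒮 → 𝒜 → ℝ) (hQ0 : ∀ x yhat z, 0 ≤ Q x yhat z)
    (hQ1 : ∀ x yhat, ∑ z, Q x yhat z = 1)
    (hQpos : ∀ x z yhat, 0 < p x z yhat → 0 < Q x yhat z) :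
    ∑ x, ∑ z, ∑ yhat, p x z yhat *
        Real.log (p x z yhat * μ x / ((∑ yhat', p x z yhat') * (∑ z', p x z' yhat)))
      ≥ (-(∑ x, μ x * ∑ z, ρ x z * Real.log (ρ x z)))
        + ∑ x, ∑ z, ∑ yhat, p x z yhat * Real.log (Q x yhat z) := by
  have hp0 : ∀ x z yhat, 0 ≤ p x z yhat := fun x z yhat => by
    rw [hp]
    exact mul_nonneg (mul_nonneg (hμ0 x) (hρ0 x z)) (hP0 x z yhat)
  have hpZ : ∀ x z, ∑ yhat, p x z yhat = μ x * ρ x z := fun x z => by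
    simp only [hp, ← mul_sum, hP1, mul_one]
  have hgap : 0 ≤ ∑ x, ∑ z, ∑ yhat,
      p x z yhat * log (p x z yhat / ((∑ z', p x z' yhat) * Q x yhat z)) :=
    sum_nonneg fun x _ => by
      rw [sum_comm]
      exact sum_nonneg fun yhat _ => sum_mul_log_div_posterior_nonneg hp0 hQ0 hQ1 hQpos x yhat
  simp only [mul_log_condMutualInfo_integrand_eq hp0 hpZ hQpos, sum_add_distrib, sum_sub_distrib,
    ← sum_mul_log_belief_eq hpZ]
  linarith

/-- FWM Lower Bound: the conditional mutual information
`I(Z;Ŷ|X)` under the data-induced joint `p(x,z,yhat) = μ(x)·ρ(z|x)·P(yhat|x,z)`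
is bounded below by the entropy of the belief distribution `ρ` plus the
expected log-probability assigned by the variational posterior `Q`. -/
theorem fwm_lower_bound
    {𝒳 𝒮 𝒜 : Type*} [Fintype 𝒳] [Fintype 𝒮] [Fintype 𝒜]
    [Nonempty 𝒳] [Nonempty 𝒮] [Nonempty 𝒜]
    (μ : 𝒳 → ℝ) (hμ0 : ∀ x, 0 ≤ μ x) (hμ1 : ∑ x, μ x = 1)
    (ρ : 𝒳 → 𝒜 → ℝ) (hρ0 : ∀ x z, 0 ≤ ρ x z) (hρ1 : ∀ x, ∑ z, ρ x z = 1)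
    (P : 𝒳 → 𝒜 → 𝒮 → ℝ) (hP0 : ∀ x z yhat, 0 ≤ P x z yhat)
    (hP1 : ∀ x z, ∑ yhat, P x z yhat = 1)
    (p : 𝒳 → 𝒜 → 𝒮 → ℝ) (hp : ∀ x z yhat, p x z yhat = μ x * ρ x z * P x z yhat)
    (Q : 𝒳 → 𝒮 → 𝒜 → ℝ) (hQ0 : ∀ x yhat z, 0 ≤ Q x yhat z)
    (hQ1 : ∀ x yhat, ∑ z, Q x yhat z = 1)
    (hQpos : ∀ x z yhat, 0 < p x z yhat → 0 < Q x yhat z) :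
    ∑ x, ∑ z, ∑ yhat, p x z yhat *
        Real.log (p x z yhat * μ x / ((∑ yhat', p x z yhat') * (∑ z', p x z' yhat)))
      ≥ (-(∑ x, μ x * ∑ z, ρ x z * Real.log (ρ x z)))
        + ∑ x, ∑ z, ∑ yhat, p x z yhat * Real.log (Q x yhat z) :=
  fwm_lower_bound_general μ hμ0 ρ hρ0 P hP0 hP1 p hp Q hQ0 hQ1 hQpos
end

section
/- (FWM Lower Bound, algorithmic form.) Let 𝒳, 𝒮, 𝒜 be finite nonempty types. Let μ be a pmf on 𝒳, D(·|x) a pmf on 𝒮 for each x (data distribution), Q_φ(·|x,y) a pmf on 𝒜 for each (x,y) ∈ 𝒳×𝒮 (inverse dynamics model), and P(·|x,z) a pmf on 𝒮 for each (x,z) (forward world model). Define the empirical belief ρ(z|x) = Σ_y D(y|x)·Q_φ(z|x,y) and the joint p(x,z,ŷ) = μ(x)·ρ(z|x)·P(ŷ|x,z), and assume Q_φ(z|x,ŷ) > 0 whenever p(x,z,ŷ) > 0. Then the conditional mutual information under p satisfies I(Z;Ŷ|X) ≥ (−Σ_x μ(x) Σ_z ρ(z|x) log ρ(z|x)) + J(θ),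 where J(θ) = Σ_x μ(x) Σ_y D(y|x) Σ_z Q_φ(z|x,y) Σ_ŷ P(ŷ|x,z) · log Q_φ(z|x,ŷ) is the reinforcement-learning objective in which transitions (x,y) are sampled from the data, the action z is inferred by the inverse dynamics model, a rollout ŷ is generated by the forward model, and the reward is the inverse model's log-likelihood of z on the generated transition. -/
/-- FWM Lower Bound, algorithmic form: with the empirical
belief `ρ(z|x) = Σ_y D(y|x)·Q_φ(z|x,y)` and joint
`p(x,z,yhat) = μ(x)·ρ(z|x)·P(yhat|x,z)`, the conditional mutual information
`I(Z;Ŷ|X)` is bounded below by the belief entropy plus the RL objective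
`J(θ) = Σ_x μ(x) Σ_y D(y|x) Σ_z Q_φ(z|x,y) Σ_yhat P(yhat|x,z)·log Q_φ(z|x,yhat)`. -/
theorem fwm_lower_bound_algorithmic
    {𝒳 𝒮 𝒜 : Type*} [Fintype 𝒳] [Fintype 𝒮] [Fintype 𝒜]
    [Nonempty 𝒳] [Nonempty 𝒮] [Nonempty 𝒜]
    (μ : 𝒳 → ℝ) (hμ0 : ∀ x, 0 ≤ μ x) (hμ1 : ∑ x, μ x = 1)
    (D : 𝒳 → 𝒮 → ℝ) (hD0 : ∀ x y, 0 ≤ D x y) (hD1 : ∀ x, ∑ y, D x y = 1)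
    (Qφ : 𝒳 → 𝒮 → 𝒜 → ℝ) (hQ0 : ∀ x y z, 0 ≤ Qφ x y z)
    (hQ1 : ∀ x y, ∑ z, Qφ x y z = 1)
    (P : 𝒳 → 𝒜 → 𝒮 → ℝ) (hP0 : ∀ x z yhat, 0 ≤ P x z yhat)
    (hP1 : ∀ x z, ∑ yhat, P x z yhat = 1)
    (ρ : 𝒳 → 𝒜 → ℝ) (hρ : ∀ x z, ρ x z = ∑ y, D x y * Qφ x y z)
    (p : 𝒳 → 𝒜 → 𝒮 → ℝ) (hp : ∀ x z yhat, p x z yhat = μ x * ρ x z * P x z yhat)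
    (hQpos : ∀ x z yhat, 0 < p x z yhat → 0 < Qφ x yhat z) :
    ∑ x, ∑ z, ∑ yhat, p x z yhat *
        Real.log (p x z yhat * μ x / ((∑ yhat', p x z yhat') * (∑ z', p x z' yhat)))
      ≥ (-(∑ x, μ x * ∑ z, ρ x z * Real.log (ρ x z)))
        + ∑ x, μ x * ∑ y, D x y * ∑ z, Qφ x y z *
            ∑ yhat, P x z yhat * Real.log (Qφ x yhat z) := by
  have hρ0 : ∀ x z, 0 ≤ ρ x z := fun x z => by
    rw [hρ]; exact Finset.sum_nonneg fun y _ => mul_nonneg (hD0 x y) (hQ0 x y z)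
  have hp0 : ∀ x z yhat, 0 ≤ p x z yhat := fun x z yhat => by
    rw [hp]; exact mul_nonneg (mul_nonneg (hμ0 x) (hρ0 x z)) (hP0 x z yhat)
  have hρ1 : ∀ x, ∑ z, ρ x z = 1 := fun x => by
    simp only [hρ]
    rw [Finset.sum_comm]
    simp only [← Finset.mul_sum, hQ1, mul_one, hD1]
  -- marginal over yhat
  have hpZ : ∀ x z, (∑ yhat', p x z yhat') = μ x * ρ x z := fun x z => by
    simp only [hp]
    rw [← Finset.mul_sum, hP1, mul_one]
  -- total mass 1
  have hsum1 : ∑ x, ∑ z, ∑ yhat, p x z yhat = 1 := by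
    have : ∀ x, ∑ z, ∑ yhat, p x z yhat = μ x := fun x => by
      simp only [hpZ]
      rw [← Finset.mul_sum, hρ1, mul_one]
    simp only [this, hμ1]
  -- identity A: entropy term
  have hSA : (∑ x, μ x * ∑ z, ρ x z * Real.log (ρ x z))
      = ∑ x, ∑ z, ∑ yhat, p x z yhat * Real.log (ρ x z) := by
    refine Finset.sum_congr rfl fun x _ => ?_
    rw [Finset.mul_sum]
    refine Finset.sum_congr rfl fun z _ => ?_
    rw [← Finset.sum_mul, hpZ x z]; ring
  -- identity B: RL objective
  have hSB : (∑ x, μ x * ∑ y, D x y * ∑ z, Qφ x y z *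
        ∑ yhat, P x z yhat * Real.log (Qφ x yhat z))
      = ∑ x, ∑ z, ∑ yhat, p x z yhat * Real.log (Qφ x yhat z) := by
    refine Finset.sum_congr rfl fun x _ => ?_
    simp only [hp, hρ, Finset.mul_sum, Finset.sum_mul]
    rw [Finset.sum_comm]
    refine Finset.sum_congr rfl fun z _ => ?_
    rw [Finset.sum_comm]
    refine Finset.sum_congr rfl fun yhat _ => ?_
    refine Finset.sum_congr rfl fun y _ => ?_
    ring
  -- the key inequality
  have key : 0 ≤ ∑ x, ∑ z, ∑ yhat,
      (p x z yhat * Real.log (p x z yhat * μ x /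
          ((∑ yhat', p x z yhat') * (∑ z', p x z' yhat)))
        + p x z yhat * Real.log (ρ x z)
        - p x z yhat * Real.log (Qφ x yhat z)) := by
    have hcomp : ∀ x z yhat,
        p x z yhat - (∑ z', p x z' yhat) * Qφ x yhat z
          ≤ p x z yhat * Real.log (p x z yhat * μ x /
              ((∑ yhat', p x z yhat') * (∑ z', p x z' yhat)))
            + p x z yhat * Real.log (ρ x z)
            - p x z yhat * Real.log (Qφ x yhat z) := by
      intro x z yhat
      obtain h | h := (hp0 x z yhat).eq_or_lt
      · rw [← h]
        simp only [zero_mul, add_zero, sub_zero, zero_sub, zero_add]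
        have : 0 ≤ (∑ z', p x z' yhat) * Qφ x yhat z :=
          mul_nonneg (Finset.sum_nonneg fun z' _ => hp0 x z' yhat) (hQ0 x yhat z)
        linarith
      · have hμx : 0 < μ x := by
          rcases (hμ0 x).lt_or_eq with h' | h'
          · exact h'
          · exfalso; rw [hp, ← h', zero_mul, zero_mul] at h; exact lt_irrefl 0 h
        have hρx : 0 < ρ x z := by
          rcases (hρ0 x z).lt_or_eq with h' | h'
          · exact h'
          · exfalso; rw [hp, ← h', mul_zero, zero_mul] at h; exact lt_irrefl 0 h
        have hpY : 0 < ∑ z', p x z' yhat :=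
          lt_of_lt_of_le h (Finset.single_le_sum (fun z' _ => hp0 x z' yhat)
            (Finset.mem_univ z))
        have hQ : 0 < Qφ x yhat z := hQpos x z yhat h
        have harg : p x z yhat * Real.log (p x z yhat * μ x /
              ((∑ yhat', p x z yhat') * (∑ z', p x z' yhat)))
            + p x z yhat * Real.log (ρ x z)
            - p x z yhat * Real.log (Qφ x yhat z)
            = p x z yhat * Real.log (p x z yhat /
                ((∑ z', p x z' yhat) * Qφ x yhat z)) := by
          rw [hpZ x z]
          rw [Real.log_div (by positivity) (by positivity),
              Real.log_div (by positivity) (by positivity),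
              Real.log_mul (by positivity) (by positivity),
              Real.log_mul (by positivity) (by positivity),
              Real.log_mul (by positivity) (by positivity),
              Real.log_mul (by positivity) (by positivity)]
          ring
        rw [harg]
        have hx : (0:ℝ) < (∑ z', p x z' yhat) * Qφ x yhat z / p x z yhat := by
          positivity
        have hlog := Real.log_le_sub_one_of_pos hx
        have hlogeq : Real.log ((∑ z', p x z' yhat) * Qφ x yhat z / p x z yhat)
            = - Real.log (p x z yhat / ((∑ z', p x z' yhat) * Qφ x yhat z)) := by
          rw [Real.log_div (by positivity) (by positivity),
              Real.log_div (by positivity) (by positivity)]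
          ring
        rw [hlogeq] at hlog
        have hdiv : (∑ z', p x z' yhat) * Qφ x yhat z / p x z yhat * p x z yhat
            = (∑ z', p x z' yhat) * Qφ x yhat z := by
          field_simp
        nlinarith [h]
    have hzero : ∑ x, ∑ z, ∑ yhat,
        (p x z yhat - (∑ z', p x z' yhat) * Qφ x yhat z) = 0 := by
      simp only [Finset.sum_sub_distrib]
      rw [hsum1]
      have : ∀ x, ∑ z, ∑ yhat, (∑ z', p x z' yhat) * Qφ x yhat z
          = ∑ z, ∑ yhat, p x z yhat := by
        intro x
        rw [Finset.sum_comm]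
        conv_rhs => rw [Finset.sum_comm]
        refine Finset.sum_congr rfl fun yhat _ => ?_
        rw [← Finset.mul_sum, hQ1, mul_one]
      simp only [this]
      rw [hsum1]; ring
    calc (0:ℝ) = ∑ x, ∑ z, ∑ yhat,
        (p x z yhat - (∑ z', p x z' yhat) * Qφ x yhat z) := hzero.symm
      _ ≤ _ := by
        refine Finset.sum_le_sum fun x _ => Finset.sum_le_sum fun z _ =>
          Finset.sum_le_sum fun yhat _ => hcomp x z yhat
  simp only [Finset.sum_add_distrib, Finset.sum_sub_distrib] at key
  rw [hSA, hSB]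
  linarith
end
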